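/- Let f, g, h be nonzero polynomials in k[x,y] with m(f) ≤ m(g), m(h) + m(f) < m(g), and g + h·f ≠ 0. Then m(g + h·f) = m(h) + m(f) and the strict transforms satisfy (g + h·f)' = x^{m(g)-m(f)-m(h)} · g' + h' · f'. -/

import Mathlib

open MvPolynomial

/-- The multiplicity of a polynomial at the origin: the smallest total degree
appearing with nonzero coefficient. -/
noncomputable def mOrd {k : Type*} [CommSemiring k] (p : MvPolynomial (Fin 2) k) : ℕ :=
  sInf {n : ℕ | homogeneousComponent n p ≠ 0}

/-- The substitution `y ↦ x·y`, i.e. `p(x, x·y)`. -/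
noncomputable def blowSub {k : Type*} [CommSemiring k] (p : MvPolynomial (Fin 2) k) :
    MvPolynomial (Fin 2) k :=
  aeval ![X 0, X 0 * X 1] p

lemma mOrd_mem {k : Type*} [CommSemiring k] {p : MvPolynomial (Fin 2) k} (hp : p ≠ 0) :
    homogeneousComponent (mOrd p) p ≠ 0 := by
  have hne : {n : ℕ | homogeneousComponent n p ≠ 0}.Nonempty := by
    by_contra hcon
    rw [Set.not_nonempty_iff_eq_empty] at hcon
    apply hp
    have := sum_homogeneousComponent p
    rw [← this]
    apply Finset.sum_eq_zero
    intro i _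
    by_contra h
    have : i ∈ {n : ℕ | homogeneousComponent n p ≠ 0} := h
    rw [hcon] at this
    exact this
  exact Nat.sInf_mem hne

lemma hc_eq_zero_of_lt {k : Type*} [CommSemiring k] {p : MvPolynomial (Fin 2) k} {n : ℕ}
    (h : n < mOrd p) : homogeneousComponent n p = 0 := by
  by_contra hcon
  exact absurd (Nat.sInf_le hcon) (not_le.2 h)

lemma coeff_eq_zero_of_degree_lt {k : Type*} [CommSemiring k] {p : MvPolynomial (Fin 2) k}
    {d : Fin 2 →₀ ℕ} (h : d.degree < mOrd p) : coeff d p = 0 := by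
  have := hc_eq_zero_of_lt h
  have h2 := coeff_homogeneousComponent (σ := Fin 2) (R := k) d.degree p d
  rw [this] at h2
  simpa using h2.symm

lemma degadd (a b : Fin 2 →₀ ℕ) : (a + b).degree = a.degree + b.degree := by
  simp [Finsupp.degree_eq_weight_one, map_add]

lemma hc_mul_key {k : Type*} [CommSemiring k] (h f : MvPolynomial (Fin 2) k) :
    homogeneousComponent (mOrd h + mOrd f) (h * f) =
      homogeneousComponent (mOrd h) h * homogeneousComponent (mOrd f) f := by
  ext d
  rw [coeff_homogeneousComponent, coeff_mul, coeff_mul]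
  by_cases hd : d.degree = mOrd h + mOrd f
  · rw [if_pos hd]
    apply Finset.sum_congr rfl
    intro x hx
    rw [Finset.HasAntidiagonal.mem_antidiagonal] at hx
    have hsum : x.1.degree + x.2.degree = mOrd h + mOrd f := by
      rw [← degadd, hx, hd]
    rw [coeff_homogeneousComponent, coeff_homogeneousComponent]
    by_cases h1 : x.1.degree = mOrd h
    · have h2 : x.2.degree = mOrd f := by omega
      rw [if_pos h1, if_pos h2]
    · rcases lt_or_gt_of_ne h1 with hlt | hgt
      · rw [coeff_eq_zero_of_degree_lt hlt, zero_mul, if_neg h1, zero_mul]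
      · have h2 : x.2.degree < mOrd f := by omega
        rw [coeff_eq_zero_of_degree_lt h2, mul_zero, if_neg h1, zero_mul]
  · rw [if_neg hd]
    symm
    apply Finset.sum_eq_zero
    intro x hx
    rw [Finset.HasAntidiagonal.mem_antidiagonal] at hx
    rw [coeff_homogeneousComponent, coeff_homogeneousComponent]
    by_cases h1 : x.1.degree = mOrd h
    · by_cases h2 : x.2.degree = mOrd f
      · exfalso; apply hd; rw [← hx, degadd, h1, h2]
      · rw [if_neg h2, mul_zero]
    · rw [if_neg h1, zero_mul]

lemma hc_mul_low {k : Type*} [CommSemiring k] (h f : MvPolynomial (Fin 2) k) {n : ℕ}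
    (hn : n < mOrd h + mOrd f) : homogeneousComponent n (h * f) = 0 := by
  ext d
  rw [coeff_homogeneousComponent]
  by_cases hd : d.degree = n
  · rw [if_pos hd, coeff_mul]
    symm
    rw [eq_comm]
    apply Finset.sum_eq_zero
    intro x hx
    rw [Finset.HasAntidiagonal.mem_antidiagonal] at hx
    have hsum : x.1.degree + x.2.degree = n := by rw [← degadd, hx, hd]
    by_cases h1 : x.1.degree < mOrd h
    · rw [coeff_eq_zero_of_degree_lt h1, zero_mul]
    · have h2 : x.2.degree < mOrd f := by omega
      rw [coeff_eq_zero_of_degree_lt h2, mul_zero]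
  · rw [if_neg hd]
    simp

theorem stmt11 {k : Type*} [Field k]
    (f g h f' g' h' : MvPolynomial (Fin 2) k)
    (hf : f ≠ 0) (hg : g ≠ 0) (hh : h ≠ 0)
    (hm : mOrd f ≤ mOrd g)
    (hm' : mOrd h + mOrd f < mOrd g)
    (hne : g + h * f ≠ 0)
    (hf' : blowSub f = X 0 ^ mOrd f * f')
    (hg' : blowSub g = X 0 ^ mOrd g * g')
    (hh' : blowSub h = X 0 ^ mOrd h * h') :
    mOrd (g + h * f) = mOrd h + mOrd f ∧
    blowSub (g + h * f) =
      X 0 ^ mOrd (g + h * f) *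
        (X 0 ^ (mOrd g - mOrd f - mOrd h) * g' + h' * f') := by
  set N := mOrd h + mOrd f with hN
  have hmemN : homogeneousComponent N (g + h * f) ≠ 0 := by
    rw [map_add, hc_eq_zero_of_lt hm', zero_add, hc_mul_key]
    exact mul_ne_zero (mOrd_mem hh) (mOrd_mem hf)
  have hlow : ∀ n < N, homogeneousComponent n (g + h * f) = 0 := by
    intro n hn
    rw [map_add, hc_eq_zero_of_lt (lt_trans hn hm'), zero_add, hc_mul_low _ _ hn]
  have hmord : mOrd (g + h * f) = N := by
    apply le_antisymm (Nat.sInf_le hmemN)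
    apply le_csInf ⟨N, hmemN⟩
    intro n hn
    by_contra hcon
    exact hn (hlow n (not_le.1 hcon))
  refine ⟨hmord, ?_⟩
  have hadd : blowSub (g + h * f) = blowSub g + blowSub h * blowSub f := by
    simp [blowSub, map_add, map_mul]
  rw [hadd, hf', hg', hh', hmord]
  have hmg : mOrd g - mOrd f - mOrd h + N = mOrd g := by omega
  rw [mul_add]
  congr 1
  · rw [← mul_assoc, ← pow_add]
    rw [add_comm (N)]
    rw [hmg]
  · ring
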